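/- arXiv:2501.00408 — 3 statements merged into one kernel-verified Lean document; each statement's English description precedes it below -/
import Mathlib

section
/- Let F = Φ ∘ T be a reciprocal transformation with scaling involution Φ of ratio ρ > 1 and distinguished set S. Then for μ-almost every x ∈ X there exists n > 0 with Fⁿ(x) ∈ S. -/
open MeasureTheory Set
open scoped ENNReal symmDiff

/-- For the reciprocal transformation `F = Φ ∘ T`, μ-almost every
point of `X` enters `S` under some positive iterate of `F`. -/
theorem reciprocal_ae_enters_S
{X : Type*} [MeasurableSpace X] (μ : Measure X) [IsProbabilityMeasure μ]
    (Φ T : X → X) (S : Set X) (ρ : ℝ≥0∞)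
    (hΦmeas : Measurable Φ) (hΦbij : Function.Bijective Φ)
    (hΦinv : Φ ∘ Φ = id)
    (hS : MeasurableSet S) (hSpos : 0 < μ S)
    (hdisj : Disjoint S (Φ '' S)) (hcover : S ∪ Φ '' S = Set.univ)
    (hlt : μ S < μ (Φ '' S))
    (hρ : ρ = μ (Φ '' S) / μ S) (hρ1 : 1 < ρ)
    (hscale : ∀ E ⊆ S, MeasurableSet E → μ (Φ '' E) = ρ * μ E)
    (hT : MeasurePreserving T μ μ) (hTbij : Function.Bijective T) :
    ∀ᵐ x ∂μ, ∃ n : ℕ, 0 < n ∧ (Φ ∘ T)^[n] x ∈ S := by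
  have hinv : Function.Involutive Φ := fun x => congrFun hΦinv x
  set F : X → X := Φ ∘ T with hF
  have hFmeas : Measurable F := hΦmeas.comp hT.measurable
  -- image of Φ equals preimage of Φ
  have himg : ∀ E : Set X, Φ '' E = Φ ⁻¹' E := by
    intro E
    ext x
    constructor
    · rintro ⟨e, he, rfl⟩
      simpa [Set.mem_preimage, hinv e] using he
    · intro hx
      exact ⟨Φ x, hx, hinv x⟩
  have hρ0 : ρ ≠ 0 := (zero_lt_one.trans hρ1).ne'
  have hρtop : ρ ≠ ∞ := by
    rw [hρ]
    exact (ENNReal.div_lt_top (measure_ne_top μ _) hSpos.ne').ne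
  set C : Set X := Φ '' S with hC
  have hCmeas : MeasurableSet C := by
    rw [hC, himg]; exact hΦmeas hS
  -- key contraction lemma
  have key : ∀ E : Set X, MeasurableSet E → E ⊆ C → μ (F ⁻¹' E) = μ E / ρ := by
    intro E hE hEC
    have hΦE_sub : Φ '' E ⊆ S := by
      intro x hx
      rcases hx with ⟨e, he, rfl⟩
      rcases hEC he with ⟨s, hs, rfl⟩
      simpa [hinv s] using hs
    have hΦE_meas : MeasurableSet (Φ '' E) := by rw [himg]; exact hΦmeas hE
    have himgimg : Φ '' (Φ '' E) = E := by
      rw [← Set.image_comp, hΦinv, Set.image_id]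
    have hmeasE : μ E = ρ * μ (Φ '' E) := by
      rw [← himgimg] at hE ⊢
      nth_rewrite 1 [hscale (Φ '' E) hΦE_sub hΦE_meas]
      rw [himgimg]
    have h1 : μ (F ⁻¹' E) = μ (Φ ⁻¹' E) := by
      rw [hF, Set.preimage_comp]
      exact hT.measure_preimage ((hΦmeas hE).nullMeasurableSet)
    rw [h1, ← himg, hmeasE, mul_comm, mul_div_assoc, ENNReal.div_self hρ0 hρtop, mul_one]
  -- the bad set
  set B : Set X := ⋂ n : ℕ, (F^[n+1]) ⁻¹' C with hB
  have hBmeas : MeasurableSet B :=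
    MeasurableSet.iInter fun n => (hFmeas.iterate (n+1)) hCmeas
  have hBsub : B ⊆ F ⁻¹' (C ∩ B) := by
    intro x hx
    have hx' : ∀ n : ℕ, F^[n+1] x ∈ C := fun n => Set.mem_iInter.mp hx n
    refine Set.mem_preimage.mpr ⟨?_, ?_⟩
    · have := hx' 0
      rwa [Function.iterate_one] at this
    · refine Set.mem_iInter.mpr fun n => ?_
      have := hx' (n+1)
      rwa [Function.iterate_succ_apply] at this
  have hBzero : μ B = 0 := by
    by_contra h0
    have hle : μ B ≤ μ (C ∩ B) / ρ := by
      calc μ B ≤ μ (F ⁻¹' (C ∩ B)) := measure_mono hBsub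
        _ = μ (C ∩ B) / ρ := key _ (hCmeas.inter hBmeas) Set.inter_subset_left
    have hle2 : μ B ≤ μ B / ρ :=
      hle.trans (ENNReal.div_le_div_right (measure_mono Set.inter_subset_right) ρ)
    have hlt2 : μ B / ρ < μ B := by
      rw [ENNReal.div_lt_iff (Or.inl hρ0) (Or.inl hρtop)]
      calc μ B = μ B * 1 := (mul_one _).symm
        _ < μ B * ρ := (ENNReal.mul_lt_mul_iff_right h0 (measure_ne_top μ B)).mpr hρ1
    exact absurd hle2 (not_le.mpr hlt2)
  -- conclude
  rw [ae_iff]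
  refine measure_mono_null ?_ hBzero
  intro x hx
  simp only [Set.mem_setOf_eq, not_exists, not_and] at hx
  simp only [hB, Set.mem_iInter, Set.mem_preimage]
  intro n
  have hns : F^[n+1] x ∉ S := hx (n+1) (Nat.succ_pos n)
  have := Set.mem_union (F^[n+1] x) S C
  rw [hcover] at this
  rcases this.mp (Set.mem_univ _) with h | h
  · exact absurd h hns
  · exact h
end

section
/- If the set S₁ of points of S returning to S after exactly one application of F has measure zero, then the first-return map F_S (and hence F) is conservative. -/
open MeasureTheory Set
open scoped ENNReal symmDiff

/-- If the set `S₁` of points of `S` returning to `S` after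
exactly one application of `F = Φ ∘ T` is null, then the first-return map
`F_S` and `F` itself are conservative. -/
theorem null_S1_implies_conservative
{X : Type*} [MeasurableSpace X] (μ : Measure X) [IsProbabilityMeasure μ]
    (Φ T : X → X) (S : Set X) (ρ : ℝ≥0∞)
    (hΦmeas : Measurable Φ) (hΦbij : Function.Bijective Φ)
    (hΦinv : Φ ∘ Φ = id)
    (hS : MeasurableSet S) (hSpos : 0 < μ S)
    (hdisj : Disjoint S (Φ '' S)) (hcover : S ∪ Φ '' S = Set.univ)
    (hlt : μ S < μ (Φ '' S))
    (hρ : ρ = μ (Φ '' S) / μ S) (hρ1 : 1 < ρ)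
    (hscale : ∀ E ⊆ S, MeasurableSet E → μ (Φ '' E) = ρ * μ E)
    (hT : MeasurePreserving T μ μ) (hTbij : Function.Bijective T)
    (ret : X → ℕ)
    (hret : ∀ᵐ x ∂μ.restrict S, 0 < ret x ∧ (Φ ∘ T)^[ret x] x ∈ S ∧
      ∀ j : ℕ, 0 < j → j < ret x → (Φ ∘ T)^[j] x ∉ S)
    (hS1 : μ {x ∈ S | (Φ ∘ T) x ∈ S} = 0) :
    (∀ W ⊆ S, MeasurableSet W →
        (∀ n : ℕ, 0 < n → Disjoint W ((fun x => (Φ ∘ T)^[ret x] x)^[n] '' W)) →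
        μ W = 0) ∧
    (∀ W : Set X, MeasurableSet W →
        (∀ n : ℕ, 0 < n → Disjoint W ((Φ ∘ T)^[n] '' W)) → μ W = 0) := by
  have hFmeas : Measurable (Φ ∘ T) := hΦmeas.comp hT.measurable
  have hinv : Function.Involutive Φ := fun x => congrFun hΦinv x
  have hpre : ∀ A : Set X, Φ '' A = Φ ⁻¹' A := fun A =>
    congrFun (Set.image_eq_preimage_of_inverse hinv.leftInverse hinv.rightInverse) A
  have himg : Φ '' S = Sᶜ := by
    ext x
    constructor
    · intro hx hxS
      exact Set.disjoint_left.mp hdisj hxS hx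
    · intro hx
      have hx2 : x ∈ S ∪ Φ '' S := by rw [hcover]; exact Set.mem_univ x
      rcases hx2 with h | h
      · exact absurd h hx
      · exact h
  have hρ0 : ρ ≠ 0 := (zero_lt_one.trans hρ1).ne'
  have hρtop : ρ ≠ ∞ := by
    rw [hρ]
    exact (ENNReal.div_lt_top (measure_ne_top μ _) hSpos.ne').ne
  have hSc : μ Sᶜ = ρ * μ S := by
    rw [← himg]; exact hscale S subset_rfl hS
  -- key preimage formula
  have key : ∀ A : Set X, MeasurableSet A →
      μ ((Φ ∘ T) ⁻¹' A) = ρ * μ (A ∩ S) + ρ⁻¹ * μ (A ∩ Sᶜ) := by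
    intro A hA
    have hΦA : MeasurableSet (Φ ⁻¹' A) := hΦmeas hA
    have h1 : (Φ ∘ T) ⁻¹' A = T ⁻¹' (Φ ⁻¹' A) := rfl
    rw [h1, hT.measure_preimage hΦA.nullMeasurableSet]
    have hsplit : Φ ⁻¹' A = Φ ⁻¹' (A ∩ S) ∪ Φ ⁻¹' (A ∩ Sᶜ) := by
      rw [← Set.preimage_union, ← Set.inter_union_distrib_left, Set.union_compl_self,
        Set.inter_univ]
    have hd : Disjoint (Φ ⁻¹' (A ∩ S)) (Φ ⁻¹' (A ∩ Sᶜ)) := by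
      apply Set.disjoint_left.mpr
      intro x h1 h2
      exact h2.2 h1.2
    rw [hsplit, measure_union hd (hΦmeas (hA.inter hS.compl))]
    congr 1
    · rw [← hpre, hscale (A ∩ S) Set.inter_subset_right (hA.inter hS)]
    · have hB : MeasurableSet (Φ ⁻¹' (A ∩ Sᶜ)) := hΦmeas (hA.inter hS.compl)
      have hBS : Φ ⁻¹' (A ∩ Sᶜ) ⊆ S := by
        intro x hx
        by_contra hxS
        have hx' : x ∈ Φ '' S := by rw [himg]; exact hxS
        obtain ⟨y, hy, rfl⟩ := hx'
        exact hx.2 (by rw [hinv y]; exact hy)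
      have hsc := hscale _ hBS hB
      rw [hpre] at hsc
      rw [show Φ ⁻¹' (Φ ⁻¹' (A ∩ Sᶜ)) = A ∩ Sᶜ from by
        rw [← Set.preimage_comp, hΦinv, Set.preimage_id]] at hsc
      rw [hsc, ← mul_assoc, ENNReal.inv_mul_cancel hρ0 hρtop, one_mul]
  -- splitting a set along S
  have hsplitS : ∀ A : Set X, μ A = μ (A ∩ S) + μ (A ∩ Sᶜ) := by
    intro A
    have h := measure_inter_add_diff (μ := μ) A hS
    rw [Set.diff_eq] at h
    exact h.symm
  have hZ1 : μ (S ∩ (Φ ∘ T) ⁻¹' S) = 0 := by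
    have he : {x ∈ S | (Φ ∘ T) x ∈ S} = S ∩ (Φ ∘ T) ⁻¹' S := rfl
    rw [← he]; exact hS1
  have hFS' : μ ((Φ ∘ T) ⁻¹' Sᶜ) = μ S := by
    rw [key Sᶜ hS.compl, Set.compl_inter_self, measure_empty, mul_zero, zero_add,
      Set.inter_self, hSc, ← mul_assoc, ENNReal.inv_mul_cancel hρ0 hρtop, one_mul]
  have hmS : μ ((Φ ∘ T) ⁻¹' Sᶜ ∩ S) = μ S := by
    have e1 : μ S = μ (S ∩ (Φ ∘ T) ⁻¹' S) + μ (S ∩ ((Φ ∘ T) ⁻¹' S)ᶜ) := by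
      have h := measure_inter_add_diff (μ := μ) S (hFmeas hS)
      rw [Set.diff_eq] at h
      exact h.symm
    rw [Set.inter_comm, Set.preimage_compl]
    rw [e1, hZ1, zero_add]
  have hZ2 : μ (Sᶜ ∩ (Φ ∘ T) ⁻¹' Sᶜ) = 0 := by
    have e2 := hsplitS ((Φ ∘ T) ⁻¹' Sᶜ)
    rw [hFS', hmS] at e2
    have : μ S + 0 = μ S + μ ((Φ ∘ T) ⁻¹' Sᶜ ∩ Sᶜ) := by rw [add_zero]; exact e2
    have h0 := (ENNReal.add_right_inj (measure_ne_top μ S)).mp this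
    rw [Set.inter_comm]
    exact h0.symm
  -- F² preserves measure (via preimages), for subsets of S
  have hF2sub : ∀ A : Set X, MeasurableSet A → A ⊆ S →
      μ ((Φ ∘ T) ⁻¹' ((Φ ∘ T) ⁻¹' A)) = μ A := by
    intro A hA hAS
    have hAc : A ∩ Sᶜ = ∅ := by
      rw [Set.eq_empty_iff_forall_notMem]
      rintro x ⟨h1, h2⟩
      exact h2 (hAS h1)
    have kA : μ ((Φ ∘ T) ⁻¹' A) = ρ * μ A := by
      rw [key A hA, Set.inter_eq_self_of_subset_left hAS, hAc, measure_empty, mul_zero, add_zero]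
    have hnul : μ ((Φ ∘ T) ⁻¹' A ∩ S) = 0 := by
      apply measure_mono_null _ hZ1
      intro x hx
      exact ⟨hx.2, hAS hx.1⟩
    have hrest : μ ((Φ ∘ T) ⁻¹' A ∩ Sᶜ) = ρ * μ A := by
      have h := hsplitS ((Φ ∘ T) ⁻¹' A)
      rw [hnul, zero_add, kA] at h
      exact h.symm
    rw [key _ (hFmeas hA), hnul, hrest, mul_zero, zero_add, ← mul_assoc,
      ENNReal.inv_mul_cancel hρ0 hρtop, one_mul]
  have hF2subc : ∀ A : Set X, MeasurableSet A → A ⊆ Sᶜ →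
      μ ((Φ ∘ T) ⁻¹' ((Φ ∘ T) ⁻¹' A)) = μ A := by
    intro A hA hAS
    have hAc : A ∩ S = ∅ := by
      rw [Set.eq_empty_iff_forall_notMem]
      rintro x ⟨h1, h2⟩
      exact hAS h1 h2
    have kA : μ ((Φ ∘ T) ⁻¹' A) = ρ⁻¹ * μ A := by
      rw [key A hA, hAc, measure_empty, mul_zero, zero_add,
        Set.inter_eq_self_of_subset_left hAS]
    have hnul : μ ((Φ ∘ T) ⁻¹' A ∩ Sᶜ) = 0 := by
      apply measure_mono_null _ hZ2
      intro x hx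
      exact ⟨hx.2, hAS hx.1⟩
    have hrest : μ ((Φ ∘ T) ⁻¹' A ∩ S) = ρ⁻¹ * μ A := by
      have h := hsplitS ((Φ ∘ T) ⁻¹' A)
      rw [hnul, add_zero, kA] at h
      exact h.symm
    rw [key _ (hFmeas hA), hnul, hrest, mul_zero, add_zero, ← mul_assoc,
      ENNReal.mul_inv_cancel hρ0 hρtop, one_mul]
  have hF2 : ∀ A : Set X, MeasurableSet A →
      μ ((Φ ∘ T) ⁻¹' ((Φ ∘ T) ⁻¹' A)) = μ A := by
    intro A hA
    have hu : A = (A ∩ S) ∪ (A ∩ Sᶜ) := by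
      rw [← Set.inter_union_distrib_left, Set.union_compl_self, Set.inter_univ]
    have hdAB : Disjoint (A ∩ S) (A ∩ Sᶜ) := by
      apply Set.disjoint_left.mpr
      intro x h1 h2
      exact h2.2 h1.2
    conv_lhs => rw [hu]
    rw [Set.preimage_union, Set.preimage_union,
      measure_union ((hdAB.preimage _).preimage _)
        (hFmeas (hFmeas (hA.inter hS.compl))),
      hF2sub _ (hA.inter hS) Set.inter_subset_right,
      hF2subc _ (hA.inter hS.compl) Set.inter_subset_right]
    exact (hsplitS A).symm
  -- F^(2k) preserves measure via preimages
  have hF2k : ∀ (k : ℕ) (A : Set X), MeasurableSet A →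
      μ ((Φ ∘ T)^[2 * k] ⁻¹' A) = μ A := by
    intro k
    induction k with
    | zero => intro A hA; simp
    | succ k ih =>
      intro A hA
      have h1 : (Φ ∘ T)^[2 * (k + 1)] = (Φ ∘ T)^[2 * k] ∘ (Φ ∘ T)^[2] := by
        rw [← Function.iterate_add, Nat.mul_succ]
      have h2 : (Φ ∘ T)^[2] = (Φ ∘ T) ∘ (Φ ∘ T) := by
        rw [show (2 : ℕ) = 1 + 1 from rfl, Function.iterate_add, Function.iterate_one]
      rw [h1, Set.preimage_comp, h2, Set.preimage_comp]
      have hm : MeasurableSet ((Φ ∘ T)^[2 * k] ⁻¹' A) := (hFmeas.iterate (2 * k)) hA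
      rw [hF2 _ hm, ih A hA]
  -- Poincaré counting lemma (even times)
  have hcount : ∀ V : Set X, MeasurableSet V →
      (∀ d : ℕ, 0 < d → ∀ x ∈ V, (Φ ∘ T)^[2 * d] x ∉ V) → μ V = 0 := by
    intro V hV hw
    by_contra h0
    have hdj : ∀ j k : ℕ, j < k →
        Disjoint ((Φ ∘ T)^[2 * j] ⁻¹' V) ((Φ ∘ T)^[2 * k] ⁻¹' V) := by
      intro j k h
      apply Set.disjoint_left.mpr
      intro x hxj hxk
      have hd : 2 * k = 2 * (k - j) + 2 * j := by omega
      have he : (Φ ∘ T)^[2 * k] x = (Φ ∘ T)^[2 * (k - j)] ((Φ ∘ T)^[2 * j] x) := by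
        rw [hd, Function.iterate_add_apply]
      exact hw (k - j) (by omega) _ hxj (by rw [← he]; exact hxk)
    have hdisjf : Pairwise (Function.onFun Disjoint (fun k : ℕ => (Φ ∘ T)^[2 * k] ⁻¹' V)) := by
      intro j k hjk
      rcases lt_or_gt_of_ne hjk with h | h
      · exact hdj j k h
      · exact (hdj k j h).symm
    have hmeasf : ∀ k : ℕ, MeasurableSet ((Φ ∘ T)^[2 * k] ⁻¹' V) :=
      fun k => (hFmeas.iterate (2 * k)) hV
    have h1 : μ (⋃ k, (Φ ∘ T)^[2 * k] ⁻¹' V) = ∑' k : ℕ, μ ((Φ ∘ T)^[2 * k] ⁻¹' V) :=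
      measure_iUnion hdisjf hmeasf
    have h2 : (∑' k : ℕ, μ ((Φ ∘ T)^[2 * k] ⁻¹' V)) = ∑' _ : ℕ, μ V :=
      tsum_congr fun k => hF2k k V hV
    have h3 : (∑' _ : ℕ, μ V) = ⊤ := ENNReal.tsum_const_eq_top_of_ne_zero h0
    have h4 : μ (⋃ k, (Φ ∘ T)^[2 * k] ⁻¹' V) ≤ 1 := prob_le_one
    rw [h1, h2, h3] at h4
    simp at h4
  constructor
  · -- conservativity of the first-return map
    intro W hWS hW hwand
    set P : X → Prop := fun x => 0 < ret x ∧ (Φ ∘ T)^[ret x] x ∈ S ∧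
      ∀ j : ℕ, 0 < j → j < ret x → (Φ ∘ T)^[j] x ∉ S with hPdef
    have hNret0 : μ ({x | ¬ P x} ∩ S) = 0 := by
      have h := ae_iff.mp hret
      rwa [Measure.restrict_apply' hS] at h
    set N := toMeasurable μ ({x | ¬ P x} ∩ S) with hNdef
    have hNmeas : MeasurableSet N := measurableSet_toMeasurable μ _
    have hN0 : μ N = 0 := by rw [hNdef, measure_toMeasurable]; exact hNret0
    set Z1 := S ∩ (Φ ∘ T) ⁻¹' S with hZ1def
    set Z2 := Sᶜ ∩ (Φ ∘ T) ⁻¹' Sᶜ with hZ2def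
    have hZ1meas : MeasurableSet Z1 := hS.inter (hFmeas hS)
    have hZ2meas : MeasurableSet Z2 := hS.compl.inter (hFmeas hS.compl)
    set E := N ∪ Z1 ∪ (Φ ∘ T) ⁻¹' Z2 with hEdef
    have hEmeas : MeasurableSet E := (hNmeas.union hZ1meas).union (hFmeas hZ2meas)
    have hFZ2 : μ ((Φ ∘ T) ⁻¹' Z2) = 0 := by
      rw [key Z2 hZ2meas,
        measure_mono_null Set.inter_subset_left hZ2,
        measure_mono_null Set.inter_subset_left hZ2, mul_zero, mul_zero, add_zero]
    have hE0 : μ E = 0 := by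
      rw [hEdef]
      exact measure_union_null (measure_union_null hN0 hZ1) hFZ2
    set B := ⋃ k : ℕ, (Φ ∘ T)^[2 * k] ⁻¹' E with hBdef
    have hBmeas : MeasurableSet B :=
      MeasurableSet.iUnion fun k => (hFmeas.iterate (2 * k)) hEmeas
    have hB0 : μ B = 0 := by
      refine le_antisymm ?_ zero_le
      calc μ B ≤ ∑' k : ℕ, μ ((Φ ∘ T)^[2 * k] ⁻¹' E) := measure_iUnion_le _
        _ = ∑' _ : ℕ, (0 : ℝ≥0∞) := tsum_congr fun k => by rw [hF2k k E hEmeas, hE0]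
        _ = 0 := tsum_zero
    have hstep : ∀ x, x ∈ S → x ∉ E → ret x = 2 ∧ (Φ ∘ T)^[2] x ∈ S := by
      intro x hxS hxE
      have hPx : P x := by
        by_contra hnp
        exact hxE (Or.inl (Or.inl (subset_toMeasurable μ _ ⟨hnp, hxS⟩)))
      obtain ⟨hpos, hretS, hmid⟩ := hPx
      have hFx : (Φ ∘ T) x ∉ S := fun h => hxE (Or.inl (Or.inr ⟨hxS, h⟩))
      have hit2 : (Φ ∘ T)^[2] x = (Φ ∘ T) ((Φ ∘ T) x) := by
        rw [show (2 : ℕ) = 1 + 1 from rfl, Function.iterate_add_apply, Function.iterate_one]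
      have hF2x : (Φ ∘ T)^[2] x ∈ S := by
        by_contra h2
        apply hxE
        refine Or.inr ⟨hFx, ?_⟩
        rw [hit2] at h2
        exact h2
      refine ⟨?_, hF2x⟩
      have hne1 : ret x ≠ 1 := by
        intro h
        rw [h, Function.iterate_one] at hretS
        exact hFx hretS
      have hle : ¬ 2 < ret x := fun h => (hmid 2 two_pos h) hF2x
      omega
    have horb : ∀ x, x ∈ W → x ∉ B → ∀ k : ℕ,
        (fun y => (Φ ∘ T)^[ret y] y)^[k] x = (Φ ∘ T)^[2 * k] x ∧ (Φ ∘ T)^[2 * k] x ∈ S := by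
      intro x hxW hxB k
      induction k with
      | zero => simpa using hWS hxW
      | succ k ih =>
        obtain ⟨hit, hS'⟩ := ih
        have hxE : (Φ ∘ T)^[2 * k] x ∉ E := by
          intro h
          exact hxB (Set.mem_iUnion.mpr ⟨k, h⟩)
        obtain ⟨hret2, hS2⟩ := hstep _ hS' hxE
        have harith : 2 * (k + 1) = 2 + 2 * k := by ring
        have hnext : (Φ ∘ T)^[2 * (k + 1)] x = (Φ ∘ T)^[2] ((Φ ∘ T)^[2 * k] x) := by
          rw [harith, Function.iterate_add_apply]
        constructor
        · rw [Function.iterate_succ_apply', hit, hret2, hnext]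
        · rw [hnext]; exact hS2
    have hW' : μ (W \ B) = 0 := by
      apply hcount _ (hW.diff hBmeas)
      intro d hd x hx hx2
      have h1 := (horb x hx.1 hx.2 d).1
      exact Set.disjoint_left.mp (hwand d hd) hx2.1 ⟨x, hx.1, h1⟩
    rw [← measure_diff_null (s := W) hB0]
    exact hW'
  · -- conservativity of F
    intro W hW hwand
    apply hcount _ hW
    intro d hd x hxW hx2
    exact Set.disjoint_left.mp (hwand (2 * d) (by omega)) hx2 ⟨x, hxW, rfl⟩
end

section
/- If E is an F-invariant measurable set of positive measure for a reciprocal transformation F = Φ ∘ T, then μ(E ∩ S)/μ(E) = μ(S) and μ(E ∩ Φ(S))/μ(E) = μ(Φ(S)). -/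
open MeasureTheory Set
open scoped ENNReal symmDiff

/-- If `E` is an invariant set of positive measure for the
reciprocal transformation `F = Φ ∘ T` (invariant up to null sets), then the
proportion of `E` inside `S` is `μ(S)` and the proportion inside `Φ(S)`
is `μ(Φ(S))`. -/
theorem invariant_set_proportion
{X : Type*} [MeasurableSpace X] (μ : Measure X) [IsProbabilityMeasure μ]
    (Φ T : X → X) (S : Set X) (ρ : ℝ≥0∞)
    (hΦmeas : Measurable Φ) (hΦbij : Function.Bijective Φ)
    (hΦinv : Φ ∘ Φ = id)
    (hS : MeasurableSet S) (hSpos : 0 < μ S)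
    (hdisj : Disjoint S (Φ '' S)) (hcover : S ∪ Φ '' S = Set.univ)
    (hlt : μ S < μ (Φ '' S))
    (hρ : ρ = μ (Φ '' S) / μ S) (hρ1 : 1 < ρ)
    (hscale : ∀ E ⊆ S, MeasurableSet E → μ (Φ '' E) = ρ * μ E)
    (hT : MeasurePreserving T μ μ) (hTbij : Function.Bijective T)
    (E : Set X) (hE : MeasurableSet E) (hEpos : 0 < μ E)
    (hEinv : μ (((Φ ∘ T) '' E) ∆ E) = 0) :
    μ (E ∩ S) / μ E = μ S ∧ μ (E ∩ Φ '' S) / μ E = μ (Φ '' S) := by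
  -- basic facts about Φ
  have hΦli : Function.LeftInverse Φ Φ := fun x => congrFun hΦinv x
  have himg : ∀ A : Set X, Φ '' A = Φ ⁻¹' A := fun A =>
    congrFun (Set.image_eq_preimage_of_inverse hΦli hΦli) A
  have hΦΦ : ∀ A : Set X, Φ ⁻¹' (Φ ⁻¹' A) = A := by
    intro A; rw [← Set.preimage_comp, hΦinv, Set.preimage_id]
  have hΦSmeas : MeasurableSet (Φ '' S) := by rw [himg]; exact hΦmeas hS
  have hρ0 : ρ ≠ 0 := (zero_lt_one.trans hρ1).ne'
  have hρtop : ρ ≠ ∞ := by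
    rw [hρ]; exact (ENNReal.div_lt_top (measure_ne_top μ _) hSpos.ne').ne
  -- reverse scaling
  have hscale' : ∀ B ⊆ Φ '' S, MeasurableSet B → μ (Φ '' B) = ρ⁻¹ * μ B := by
    intro B hBsub hB
    have hBS : Φ '' B ⊆ S := by
      intro x hx
      rcases hx with ⟨b, hb, rfl⟩
      have := hBsub hb
      rw [himg] at this
      exact this
    have hBmeas : MeasurableSet (Φ '' B) := by rw [himg]; exact hΦmeas hB
    have h1 : μ (Φ '' (Φ '' B)) = ρ * μ (Φ '' B) := hscale _ hBS hBmeas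
    have h2 : Φ '' (Φ '' B) = B := by rw [himg, himg, hΦΦ]
    rw [h2] at h1
    calc μ (Φ '' B) = ρ⁻¹ * (ρ * μ (Φ '' B)) := by
          rw [← mul_assoc, ENNReal.inv_mul_cancel hρ0 hρtop, one_mul]
      _ = ρ⁻¹ * μ B := by rw [← h1]
  -- Φ preimage preserves null sets
  have hΦnull : ∀ N : Set X, μ N = 0 → μ (Φ ⁻¹' N) = 0 := by
    intro N hN
    set M := toMeasurable μ N with hM
    have hMnull : μ M = 0 := by rw [measure_toMeasurable]; exact hN
    have hMmeas : MeasurableSet M := measurableSet_toMeasurable μ N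
    have hsub : Φ ⁻¹' N ⊆ Φ '' (M ∩ S) ∪ Φ '' (M ∩ Φ '' S) := by
      rw [himg, himg]
      intro x hx
      have hx' : Φ x ∈ M := subset_toMeasurable μ N hx
      rcases (hcover ▸ Set.mem_univ (Φ x) : Φ x ∈ S ∪ Φ '' S) with h | h
      · exact Or.inl ⟨hx', h⟩
      · exact Or.inr ⟨hx', h⟩
    have h1 : μ (Φ '' (M ∩ S)) = 0 := by
      rw [hscale _ Set.inter_subset_right (hMmeas.inter hS),
        measure_inter_null_of_null_left _ hMnull, mul_zero]
    have h2 : μ (Φ '' (M ∩ Φ '' S)) = 0 := by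
      rw [hscale' _ Set.inter_subset_right (hMmeas.inter hΦSmeas),
        measure_inter_null_of_null_left _ hMnull, mul_zero]
    exact le_antisymm (le_trans (measure_mono hsub)
      (le_trans (measure_union_le _ _) (by rw [h1, h2, add_zero]))) (zero_le)
  -- symmDiff-null sets have equal measures of intersections
  have hsymm : ∀ P Q Z : Set X, μ (P ∆ Q) = 0 → μ (P ∩ Z) = μ (Q ∩ Z) := by
    intro P Q Z h
    have hPQ : P =ᵐ[μ] Q := measure_symmDiff_eq_zero_iff.mp h
    exact measure_congr (hPQ.inter (Filter.EventuallyEq.refl _ _))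
  have hsymm' : ∀ P Q : Set X, μ (P ∆ Q) = 0 → μ P = μ Q := by
    intro P Q h
    exact measure_congr (measure_symmDiff_eq_zero_iff.mp h)
  -- the set A
  set A := Φ ⁻¹' E with hAdef
  have hA : MeasurableSet A := hΦmeas hE
  -- T '' E is a.e. equal to A
  have hTA : μ ((T '' E) ∆ A) = 0 := by
    have heq : (T '' E) ∆ A = Φ ⁻¹' (((Φ ∘ T) '' E) ∆ E) := by
      rw [Set.preimage_symmDiff, Set.image_comp, himg (T '' E), hΦΦ]
    rw [heq]; exact hΦnull _ hEinv
  -- μ A = μ E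
  have hTnull : ∀ N : Set X, μ N = 0 → μ (T ⁻¹' N) = 0 := by
    intro N hN
    have : μ (T ⁻¹' (toMeasurable μ N)) = 0 := by
      rw [hT.measure_preimage (measurableSet_toMeasurable μ N).nullMeasurableSet,
        measure_toMeasurable]; exact hN
    exact measure_mono_null (Set.preimage_mono (subset_toMeasurable μ N)) this
  have hAE : μ A = μ E := by
    have h0 : μ ((T ⁻¹' (T '' E)) ∆ (T ⁻¹' A)) = 0 := by
      rw [← Set.preimage_symmDiff]; exact hTnull _ hTA
    rw [Set.preimage_image_eq E hTbij.injective] at h0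
    have h1 : μ E = μ (T ⁻¹' A) := hsymm' _ _ h0
    rw [h1, hT.measure_preimage hA.nullMeasurableSet]
  -- Φ-preimage of a.e.-equal sets
  have hΦae : ∀ P Q : Set X, μ (P ∆ Q) = 0 → μ (Φ ⁻¹' P) = μ (Φ ⁻¹' Q) := by
    intro P Q h
    refine hsymm' _ _ ?_
    rw [← Set.preimage_symmDiff]; exact hΦnull _ h
  -- key equation 1 : μ (E ∩ S) = ρ⁻¹ * μ (A ∩ Φ '' S)
  have hESdecomp : μ (E ∩ S) = ρ⁻¹ * μ (A ∩ Φ '' S) := by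
    have h1 : μ (E ∩ S) = μ (((Φ ∘ T) '' E) ∩ S) := (hsymm _ _ S hEinv).symm
    have h2 : ((Φ ∘ T) '' E) ∩ S = Φ ⁻¹' ((T '' E) ∩ Φ '' S) := by
      rw [Set.image_comp, himg (T '' E), himg S, Set.preimage_inter, hΦΦ]
    have h3 : μ (((T '' E) ∩ Φ '' S) ∆ (A ∩ Φ '' S)) = 0 := by
      refine measure_mono_null ?_ hTA
      intro x hx
      simp only [Set.mem_symmDiff, Set.mem_inter_iff] at hx ⊢
      tauto
    have h4 : μ (Φ ⁻¹' ((T '' E) ∩ Φ '' S)) = μ (Φ ⁻¹' (A ∩ Φ '' S)) := hΦae _ _ h3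
    rw [h1, h2, h4, ← himg,
      hscale' _ Set.inter_subset_right (hA.inter hΦSmeas)]
  -- key equation 2 : μ (E ∩ Φ '' S) = ρ * μ (A ∩ S)
  have hEΦSdecomp : μ (E ∩ Φ '' S) = ρ * μ (A ∩ S) := by
    have h1 : μ (E ∩ Φ '' S) = μ (((Φ ∘ T) '' E) ∩ Φ '' S) :=
      (hsymm _ _ (Φ '' S) hEinv).symm
    have h2 : ((Φ ∘ T) '' E) ∩ Φ '' S = Φ ⁻¹' ((T '' E) ∩ S) := by
      rw [Set.image_comp, himg (T '' E), himg S, Set.preimage_inter]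
    have h3 : μ (((T '' E) ∩ S) ∆ (A ∩ S)) = 0 := by
      refine measure_mono_null ?_ hTA
      intro x hx
      simp only [Set.mem_symmDiff, Set.mem_inter_iff] at hx ⊢
      tauto
    have h4 : μ (Φ ⁻¹' ((T '' E) ∩ S)) = μ (Φ ⁻¹' (A ∩ S)) := hΦae _ _ h3
    rw [h1, h2, h4, ← himg]
    exact hscale (A ∩ S) Set.inter_subset_right (hA.inter hS)
  -- decompositions of μ E and μ A
  have hcompl : Φ '' S = Sᶜ := by
    ext x
    constructor
    · intro hx hxS; exact (Set.disjoint_left.mp hdisj) hxS hx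
    · intro hx
      rcases (hcover ▸ Set.mem_univ x : x ∈ S ∪ Φ '' S) with h | h
      · exact absurd h hx
      · exact h
  have hEsum : μ (E ∩ S) + μ (E ∩ Φ '' S) = μ E := by
    rw [hcompl, ← Set.diff_eq]; exact measure_inter_add_diff E hS
  have hAsum : μ (A ∩ S) + μ (A ∩ Φ '' S) = μ E := by
    rw [hcompl, ← Set.diff_eq, measure_inter_add_diff A hS]; exact hAE
  have hSsum : μ S + μ (Φ '' S) = 1 := by
    rw [← measure_union hdisj hΦSmeas, hcover, measure_univ]
  have hSscale : μ (Φ '' S) = ρ * μ S := hscale S subset_rfl hS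
  -- pass to real numbers
  set ra := (μ (E ∩ S)).toReal with hra
  set rb := (μ (E ∩ Φ '' S)).toReal with hrb
  set ra' := (μ (A ∩ S)).toReal with hra'
  set rb' := (μ (A ∩ Φ '' S)).toReal with hrb'
  set rρ := ρ.toReal with hrρ
  set rS := (μ S).toReal with hrS
  set rΦS := (μ (Φ '' S)).toReal with hrΦS
  have hρpos : (1:ℝ) < rρ := by
    rw [hrρ, ← ENNReal.toReal_one]
    exact ENNReal.toReal_strict_mono hρtop hρ1
  have hr0 : (0:ℝ) < rρ := lt_trans one_pos hρpos
  have e1 : ra = rρ⁻¹ * rb' := by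
    rw [hra, hESdecomp, ENNReal.toReal_mul, ENNReal.toReal_inv]
  have e2 : rb = rρ * ra' := by
    rw [hrb, hEΦSdecomp, ENNReal.toReal_mul]
  have e3 : ra + rb = (μ E).toReal := by
    rw [hra, hrb, ← ENNReal.toReal_add (measure_ne_top μ _) (measure_ne_top μ _), hEsum]
  have e3' : ra' + rb' = (μ E).toReal := by
    rw [hra', hrb', ← ENNReal.toReal_add (measure_ne_top μ _) (measure_ne_top μ _), hAsum]
  have e4 : rS + rΦS = 1 := by
    rw [hrS, hrΦS, ← ENNReal.toReal_add (measure_ne_top μ _) (measure_ne_top μ _), hSsum,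
      ENNReal.toReal_one]
  have e5 : rΦS = rρ * rS := by rw [hrΦS, hSscale, ENNReal.toReal_mul]
  have e7 : 0 < (μ E).toReal := ENNReal.toReal_pos hEpos.ne' (measure_ne_top μ E)
  have hb' : rb' = rρ * ra := by
    rw [e1, ← mul_assoc, mul_inv_cancel₀ hr0.ne', one_mul]
  have ha' : ra' = rρ⁻¹ * rb := by
    rw [e2, ← mul_assoc, inv_mul_cancel₀ hr0.ne', one_mul]
  have eqn : ra + rb = rρ⁻¹ * rb + rρ * ra := by
    rw [← ha', ← hb', e3, e3']
  have hinv : rρ * rρ⁻¹ = 1 := mul_inv_cancel₀ hr0.ne'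
  have h2 : (rρ - 1) * rb = (rρ - 1) * (rρ * ra) := by
    linear_combination rρ * eqn + rb * hinv
  have hba : rb = rρ * ra := mul_left_cancel₀ (sub_ne_zero.mpr hρpos.ne') h2
  have hanneg : 0 ≤ ra := ENNReal.toReal_nonneg
  have hapos : 0 < ra := by
    rcases lt_or_eq_of_le hanneg with h | h
    · exact h
    · exfalso; rw [← h] at hba; nlinarith
  have hSval : rS * (1 + rρ) = 1 := by linear_combination e4 - e5
  have hden : ra + rρ * ra ≠ 0 := by nlinarith
  constructor
  · have hne : μ (E ∩ S) / μ E ≠ ∞ := (ENNReal.div_lt_top (measure_ne_top μ _) hEpos.ne').ne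
    refine (ENNReal.toReal_eq_toReal_iff' hne (measure_ne_top μ S)).mp ?_
    rw [ENNReal.toReal_div, ← hra, ← hrS, ← e3, hba,
      div_eq_iff (by rw [← hba]; rw [hba]; exact hden)]
    linear_combination (-ra) * hSval
  · have hne : μ (E ∩ Φ '' S) / μ E ≠ ∞ := (ENNReal.div_lt_top (measure_ne_top μ _) hEpos.ne').ne
    refine (ENNReal.toReal_eq_toReal_iff' hne (measure_ne_top μ (Φ '' S))).mp ?_
    rw [ENNReal.toReal_div, ← hrb, ← hrΦS, ← e3, hba, e5,
      div_eq_iff hden]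
    linear_combination (-(rρ * ra)) * hSval
end
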